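/- arXiv:2508.16338 — 2 statements merged into one kernel-verified Lean document; each statement's English description precedes it below -/
import Mathlib

section
/- If G and H are finite simple graphs having no isolated vertices, then ι(G □ H) ≤ β(G)·β(H), where β denotes the vertex cover number. -/
/-- The closed neighborhood `N[A]` of a set of vertices. -/
def closedNbhd {V : Type*} (G : SimpleGraph V) (A : Set V) : Set V :=
  {v | v ∈ A ∨ ∃ a ∈ A, G.Adj a v}

/-- A set of vertices is independent if it contains no edge. -/
def IndepSet {V : Type*} (G : SimpleGraph V) (S : Set V) : Prop :=
  ∀ u ∈ S, ∀ v ∈ S, ¬ G.Adj u v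

/-- `A` is isolating if the vertices outside `N[A]` form an independent set. -/
def IsIsolating {V : Type*} (G : SimpleGraph V) (A : Set V) : Prop :=
  IndepSet G (closedNbhd G A)ᶜ

/-- The isolation number `ι(G)`. -/
noncomputable def isolationNum {V : Type*} (G : SimpleGraph V) : ℕ :=
  sInf {n | ∃ A : Set V, IsIsolating G A ∧ A.ncard = n}

/-- `D` is a dominating set if `N[D] = V(G)`. -/
def IsDominating {V : Type*} (G : SimpleGraph V) (D : Set V) : Prop :=
  closedNbhd G D = Set.univ

/-- The domination number `γ(G)`. -/
noncomputable def dominationNum {V : Type*} (G : SimpleGraph V) : ℕ :=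
  sInf {n | ∃ D : Set V, IsDominating G D ∧ D.ncard = n}
/-- The independence number `α(G)`. -/
noncomputable def indepNum {V : Type*} (G : SimpleGraph V) : ℕ :=
  sSup {n | ∃ S : Set V, IndepSet G S ∧ S.ncard = n}

/-- A vertex cover: a set of vertices meeting every edge. -/
def IsVertexCover {V : Type*} (G : SimpleGraph V) (B : Set V) : Prop :=
  ∀ u v, G.Adj u v → u ∈ B ∨ v ∈ B

/-- The vertex cover number `β(G)`. -/
noncomputable def vertexCoverNum {V : Type*} (G : SimpleGraph V) : ℕ :=
  sInf {n | ∃ B : Set V, IsVertexCover G B ∧ B.ncard = n}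

/-!
Take minimum vertex covers `B` of `G` and `C` of `H`. Since no vertex is isolated, a vertex cover
is dominating, so every vertex `(g, h)` with `g ∈ B` or `h ∈ C` is dominated by `B × C`. The
undominated vertices therefore lie in `Bᶜ × Cᶜ`, a product of independent sets, which is
independent in `G □ H`. Hence `B × C` is an isolating set of size `β(G) β(H)`.
-/

section

variable {V W : Type*} {G : SimpleGraph V} {H : SimpleGraph W}

theorem IndepSet.mono {S T : Set V} (hT : IndepSet G T) (hST : S ⊆ T) : IndepSet G S :=
  fun u hu v hv => hT u (hST hu) v (hST hv)

theorem IndepSet.boxProd_prod {S : Set V} {T : Set W} (hS : IndepSet G S) (hT : IndepSet H T) :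
    IndepSet (G □ H) (S ×ˢ T) := by
  rintro ⟨g, h⟩ ⟨hg, hh⟩ ⟨g', h'⟩ ⟨hg', hh'⟩ (⟨hadj, -⟩ | ⟨hadj, -⟩)
  · exact hS g hg g' hg' hadj
  · exact hT h hh h' hh' hadj

theorem IsVertexCover.indepSet_compl {B : Set V} (hB : IsVertexCover G B) : IndepSet G Bᶜ :=
  fun u hu v hv huv => (hB u v huv).elim hu hv

theorem IsVertexCover.isDominating (hG : ∀ v : V, ∃ u, G.Adj v u) {B : Set V}
    (hB : IsVertexCover G B) : IsDominating G B := by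
  refine Set.eq_univ_of_forall fun v => ?_
  by_cases hv : v ∈ B
  · exact Or.inl hv
  · obtain ⟨u, hvu⟩ := hG v
    exact Or.inr ⟨u, (hB v u hvu).resolve_left hv, hvu.symm⟩

theorem prod_closedNbhd_subset_closedNbhd_boxProd (B : Set V) (C : Set W) :
    B ×ˢ closedNbhd H C ⊆ closedNbhd (G □ H) (B ×ˢ C) := by
  rintro ⟨g, h⟩ ⟨hg, hh | ⟨c, hc, hch⟩⟩
  · exact Or.inl ⟨hg, hh⟩
  · exact Or.inr ⟨(g, c), ⟨hg, hc⟩, SimpleGraph.boxProd_adj_right.mpr hch⟩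

theorem closedNbhd_prod_subset_closedNbhd_boxProd (B : Set V) (C : Set W) :
    closedNbhd G B ×ˢ C ⊆ closedNbhd (G □ H) (B ×ˢ C) := by
  rintro ⟨g, h⟩ ⟨hg | ⟨b, hb, hbg⟩, hh⟩
  · exact Or.inl ⟨hg, hh⟩
  · exact Or.inr ⟨(b, h), ⟨hb, hh⟩, SimpleGraph.boxProd_adj_left.mpr hbg⟩

theorem compl_closedNbhd_boxProd_subset {B : Set V} {C : Set W} (hB : IsDominating G B)
    (hC : IsDominating H C) : (closedNbhd (G □ H) (B ×ˢ C))ᶜ ⊆ Bᶜ ×ˢ Cᶜ := by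
  rintro ⟨g, h⟩ hgh
  refine ⟨fun hg => hgh ?_, fun hh => hgh ?_⟩
  · exact prod_closedNbhd_subset_closedNbhd_boxProd B C ⟨hg, hC ▸ Set.mem_univ h⟩
  · exact closedNbhd_prod_subset_closedNbhd_boxProd B C ⟨hB ▸ Set.mem_univ g, hh⟩

theorem IsVertexCover.isIsolating_boxProd_prod (hG : ∀ v : V, ∃ u, G.Adj v u)
    (hH : ∀ w : W, ∃ u, H.Adj w u) {B : Set V} {C : Set W} (hB : IsVertexCover G B)
    (hC : IsVertexCover H C) : IsIsolating (G □ H) (B ×ˢ C) :=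
  (hB.indepSet_compl.boxProd_prod hC.indepSet_compl).mono
    (compl_closedNbhd_boxProd_subset (hB.isDominating hG) (hC.isDominating hH))

theorem isolationNum_le_ncard {A : Set V} (hA : IsIsolating G A) : isolationNum G ≤ A.ncard :=
  Nat.sInf_le ⟨A, hA, rfl⟩

theorem exists_isVertexCover_ncard_eq_vertexCoverNum (G : SimpleGraph V) :
    ∃ B : Set V, IsVertexCover G B ∧ B.ncard = vertexCoverNum G :=
  Nat.sInf_mem (s := {n | ∃ B : Set V, IsVertexCover G B ∧ B.ncard = n})
    ⟨_, Set.univ, fun _ _ _ => Or.inl trivial, rfl⟩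

end

theorem isolation_boxProd_le_vertexCover_mul_general
    {V W : Type*} (G : SimpleGraph V) (H : SimpleGraph W)
    (hG : ∀ v : V, ∃ u, G.Adj v u) (hH : ∀ w : W, ∃ u, H.Adj w u) :
    isolationNum (G.boxProd H) ≤ vertexCoverNum G * vertexCoverNum H := by
  obtain ⟨B, hB, hB_card⟩ := exists_isVertexCover_ncard_eq_vertexCoverNum G
  obtain ⟨C, hC, hC_card⟩ := exists_isVertexCover_ncard_eq_vertexCoverNum H
  calc isolationNum (G □ H) ≤ (B ×ˢ C).ncard :=
        isolationNum_le_ncard (hB.isIsolating_boxProd_prod hG hH hC)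
    _ = vertexCoverNum G * vertexCoverNum H := by rw [Set.ncard_prod, hB_card, hC_card]

/-- If `G` and `H` have no isolated vertices, then `ι(G □ H) ≤ β(G)·β(H)`. -/
theorem isolation_boxProd_le_vertexCover_mul
    {V W : Type*} [Fintype V] [Fintype W] (G : SimpleGraph V) (H : SimpleGraph W)
    (hG : ∀ v : V, ∃ u, G.Adj v u) (hH : ∀ w : W, ∃ u, H.Adj w u) :
    isolationNum (G.boxProd H) ≤ vertexCoverNum G * vertexCoverNum H :=
  isolation_boxProd_le_vertexCover_mul_general G H hG hH
end

section
/- If G is a finite simple graph of order n(G) and t ≥ 2 is an integer, then ι(S_G^t) ≤ ξ(S_G²)·n(G)^{t−2}, where S_G^t is the t-th generalized Sierpiński graph of base G and ξ(S_G²) is the minimum cardinality of an isolating set D of S_G² with |D| ≤ γ(S_G²) such that there is no edge ij of G with both extreme vertices ii and jj lying outside N[D]. -/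
/-- The generalized Sierpiński graph `S_G^t` on words of length `t` over `V(G)`. -/
def sierpinskiGraph {V : Type*} (G : SimpleGraph V) (t : ℕ) : SimpleGraph (Fin t → V) where
  Adj u v := ∃ i : Fin t, (∀ j, j < i → u j = v j) ∧ u i ≠ v i ∧ G.Adj (u i) (v i) ∧
      ∀ j, i < j → u j = v i ∧ v j = u i
  symm := by
    constructor
    rintro u v ⟨i, h1, h2, h3, h4⟩
    exact ⟨i, fun j hj => (h1 j hj).symm, h2.symm, h3.symm,
      fun j hj => ⟨(h4 j hj).2, (h4 j hj).1⟩⟩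
  loopless := by
    constructor
    rintro u ⟨i, -, h2, -, -⟩
    exact h2 rfl

/-- The extreme vertices of `S_G^t`: the constant words. -/
def extremeVertices (V : Type*) (t : ℕ) : Set (Fin t → V) :=
  {w | ∃ x : V, w = fun _ => x}
/-- `ξ(S_G²)`: the minimum size of an isolating set `D` of `S_G²` of size at most
`γ(S_G²)` such that no two extreme vertices `ii`, `jj` with `ij ∈ E(G)` both lie
outside `N[D]`. -/
noncomputable def xiNum {V : Type*} (G : SimpleGraph V) : ℕ :=
  sInf {n | ∃ D : Set (Fin 2 → V), IsIsolating (sierpinskiGraph G 2) D ∧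
      D.ncard ≤ dominationNum (sierpinskiGraph G 2) ∧
      (∀ i j : V, ((fun _ => i) : Fin 2 → V) ∉ closedNbhd (sierpinskiGraph G 2) D →
        ((fun _ => j) : Fin 2 → V) ∉ closedNbhd (sierpinskiGraph G 2) D → ¬ G.Adj i j) ∧
      D.ncard = n}

def CoversExtremeEdges {V : Type*} (G : SimpleGraph V) {n : ℕ} (D : Set (Fin n → V)) : Prop :=
  ∀ x y : V, (fun _ => x) ∉ closedNbhd (sierpinskiGraph G n) D →
    (fun _ => y) ∉ closedNbhd (sierpinskiGraph G n) D → ¬ G.Adj x y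

section WordSuffix

variable {V : Type*} {G : SimpleGraph V} {m n : ℕ}

def wordSuffix (m : ℕ) (u : Fin (m + n) → V) : Fin n → V :=
  fun k => u (Fin.natAdd m k)

@[simp]
lemma wordSuffix_append (p : Fin m → V) (d : Fin n → V) : wordSuffix m (Fin.append p d) = d := by
  funext k
  simp [wordSuffix]

lemma append_wordSuffix (u : Fin (m + n) → V) :
    Fin.append (fun i => u (Fin.castAdd n i)) (wordSuffix m u) = u :=
  Fin.append_castAdd_natAdd

lemma Fin.castAdd_lt_natAdd (a : Fin m) (b : Fin n) : Fin.castAdd n a < Fin.natAdd m b := by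
  simp only [Fin.lt_def, Fin.val_castAdd, Fin.val_natAdd]
  omega

lemma sierpinskiGraph_adj_append_append {p : Fin m → V} {d d' : Fin n → V}
    (h : (sierpinskiGraph G n).Adj d d') :
    (sierpinskiGraph G (m + n)).Adj (Fin.append p d) (Fin.append p d') := by
  obtain ⟨b, hlt, hne, hadj, hgt⟩ := h
  refine ⟨Fin.natAdd m b, fun j hj => ?_, by simpa using hne, by simpa using hadj, fun j hj => ?_⟩
  · induction j using Fin.addCases with
    | left a => simp
    | right c => simpa using hlt c (by simpa using hj)
  · induction j using Fin.addCases with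
    | left a => exact absurd hj (Fin.castAdd_lt_natAdd a b).asymm
    | right c => simpa using hgt c (by simpa using hj)

lemma sierpinskiGraph_adj_wordSuffix {u v : Fin (m + n) → V}
    (h : (sierpinskiGraph G (m + n)).Adj u v) :
    (sierpinskiGraph G n).Adj (wordSuffix m u) (wordSuffix m v) ∨
      ∃ x y, G.Adj x y ∧ wordSuffix m u = (fun _ => x) ∧ wordSuffix m v = (fun _ => y) := by
  obtain ⟨i, hlt, hne, hadj, hgt⟩ := h
  induction i using Fin.addCases with
  | left a =>
    exact Or.inr ⟨_, _, hadj.symm, funext fun k => (hgt _ (Fin.castAdd_lt_natAdd a k)).1,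
      funext fun k => (hgt _ (Fin.castAdd_lt_natAdd a k)).2⟩
  | right b =>
    exact Or.inl ⟨b, fun j hj => hlt _ (by simpa using hj), hne, hadj,
      fun j hj => hgt _ (by simpa using hj)⟩

lemma mem_closedNbhd_preimage_wordSuffix {D : Set (Fin n → V)} {u : Fin (m + n) → V}
    (h : wordSuffix m u ∈ closedNbhd (sierpinskiGraph G n) D) :
    u ∈ closedNbhd (sierpinskiGraph G (m + n)) (wordSuffix m ⁻¹' D) := by
  rcases h with h | ⟨d, hd, hadj⟩
  · exact Or.inl h
  · refine Or.inr ⟨Fin.append (fun i => u (Fin.castAdd n i)) d, by simpa using hd, ?_⟩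
    conv_rhs => rw [← append_wordSuffix u]
    exact sierpinskiGraph_adj_append_append hadj

lemma ncard_preimage_wordSuffix (D : Set (Fin n → V)) :
    (wordSuffix m ⁻¹' D).ncard = Nat.card V ^ m * D.ncard := by
  have hpre : wordSuffix m ⁻¹' D = (Fin.appendEquiv m n).symm ⁻¹' (Set.univ ×ˢ D) := by
    ext u
    simp only [Set.mem_preimage, Fin.appendEquiv_symm_apply, Set.mem_prod, Set.mem_univ, true_and]
    rfl
  rw [hpre, Set.ncard_preimage_of_injective_subset_range (Fin.appendEquiv m n).symm.injective
    (by simp), Set.ncard_prod, Set.ncard_univ, Nat.card_fun, Nat.card_fin]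

lemma IsIsolating.preimage_wordSuffix {D : Set (Fin n → V)}
    (hD : IsIsolating (sierpinskiGraph G n) D) (hext : CoversExtremeEdges G D) :
    IsIsolating (sierpinskiGraph G (m + n)) (wordSuffix m ⁻¹' D) := by
  intro u hu v hv huv
  have hu' := mt mem_closedNbhd_preimage_wordSuffix hu
  have hv' := mt mem_closedNbhd_preimage_wordSuffix hv
  rcases sierpinskiGraph_adj_wordSuffix huv with h | ⟨x, y, hxy, hux, hvy⟩
  · exact hD _ hu' _ hv' h
  · exact hext x y (hux ▸ hu') (hvy ▸ hv') hxy

end WordSuffix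

lemma IsDominating.isIsolating {V : Type*} {G : SimpleGraph V} {D : Set V}
    (h : IsDominating G D) : IsIsolating G D := by
  intro u hu
  exact absurd (h ▸ Set.mem_univ u) hu

lemma IsDominating.coversExtremeEdges {V : Type*} {G : SimpleGraph V} {n : ℕ}
    {D : Set (Fin n → V)} (h : IsDominating (sierpinskiGraph G n) D) : CoversExtremeEdges G D := by
  intro x _ hx
  exact absurd (h ▸ Set.mem_univ _) hx

lemma exists_isDominating_ncard_eq_dominationNum {V : Type*} (G : SimpleGraph V) :
    ∃ D : Set V, IsDominating G D ∧ D.ncard = dominationNum G :=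
  Nat.sInf_mem (s := {n | ∃ D : Set V, IsDominating G D ∧ D.ncard = n})
    ⟨_, Set.univ, Set.eq_univ_of_forall fun _ => Or.inl trivial, rfl⟩

lemma exists_ncard_eq_xiNum {V : Type*} (G : SimpleGraph V) :
    ∃ D : Set (Fin 2 → V), IsIsolating (sierpinskiGraph G 2) D ∧ CoversExtremeEdges G D ∧
      D.ncard = xiNum G := by
  obtain ⟨D₀, hdom, hcard⟩ := exists_isDominating_ncard_eq_dominationNum (sierpinskiGraph G 2)
  -- a minimum dominating set shows that the infimum defining `xiNum` is over a nonempty set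
  have hxi : xiNum G ∈ {n | ∃ D : Set (Fin 2 → V), IsIsolating (sierpinskiGraph G 2) D ∧
      D.ncard ≤ dominationNum (sierpinskiGraph G 2) ∧ CoversExtremeEdges G D ∧ D.ncard = n} :=
    Nat.sInf_mem ⟨_, D₀, hdom.isIsolating, hcard.le, hdom.coversExtremeEdges, rfl⟩
  obtain ⟨D, hiso, -, hext, hD⟩ := hxi
  exact ⟨D, hiso, hext, hD⟩

/-- For `t ≥ 2`, `ι(S_G^t) ≤ ξ(S_G²) · n(G)^{t−2}`. -/
theorem isolation_sierpinski_le_xi_mul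
    {V : Type*} [Fintype V] (G : SimpleGraph V) (t : ℕ) (ht : 2 ≤ t) :
    isolationNum (sierpinskiGraph G t) ≤ xiNum G * Fintype.card V ^ (t - 2) := by
  obtain ⟨m, rfl⟩ := Nat.exists_eq_add_of_le' ht
  obtain ⟨D, hiso, hext, hcard⟩ := exists_ncard_eq_xiNum G
  calc isolationNum (sierpinskiGraph G (m + 2))
      ≤ (wordSuffix m ⁻¹' D).ncard := Nat.sInf_le ⟨_, hiso.preimage_wordSuffix hext, rfl⟩
    _ = xiNum G * Fintype.card V ^ (m + 2 - 2) := by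
      rw [ncard_preimage_wordSuffix, hcard, Nat.card_eq_fintype_card, Nat.add_sub_cancel, mul_comm]
end
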